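/- Let R be an integral domain and T a t-flat overring of R. Then for every nonzero fractional ideal I of R, I_t ⊆ (IT)_{t₁}, where t₁ denotes the t-operation of the ring T. -/
import Mathlib


/-!
Common definitions: star operations (`v`- and `t`-closure), `t`-ideals, `t`-invertibility,
PVMDs, overrings, `t`-linked and `t`-flat overrings, localizations inside the quotient
field, Nagata and Kaplansky transforms, endomorphism rings of ideals.
-/

open scoped Classical

namespace PVMDPaper

noncomputable section

section Generic

variable (A : Type*) [CommRing A] (K : Type*) [Field K] [Algebra A K]

/-- The image of an integral ideal of `A` inside the field `K`, as an `A`-submodule of `K`. -/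
def toK (I : Ideal A) : Submodule A K := Submodule.map (Algebra.linearMap A K) I

variable {A K}

/-- The dual `I⁻¹ = (A : I) = {x ∈ K : x I ⊆ A}` of a submodule of `K`. -/
def dual (I : Submodule A K) : Submodule A K := 1 / I

/-- The `v`-closure `I_v = (I⁻¹)⁻¹`. -/
def vOp (I : Submodule A K) : Submodule A K := 1 / (1 / I)

/-- The `t`-closure `I_t`: the union of `J_v` where `J` ranges over the nonzero finitely
generated submodules `J ≤ I` (the union of this directed family is its supremum). -/
def tOp (I : Submodule A K) : Submodule A K :=
  sSup {V | ∃ J : Submodule A K, J ≠ ⊥ ∧ J.FG ∧ J ≤ I ∧ V = vOp J}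

variable (K)

/-- An (integral) ideal `I` of `A` is a `t`-ideal if `I = I_t`. -/
def IsTIdeal (I : Ideal A) : Prop := tOp (toK A K I) = toK A K I

/-- An ideal `I` is `t`-invertible if `(I I⁻¹)_t = A`. -/
def IsTInvertible (I : Ideal A) : Prop := tOp (toK A K I * dual (toK A K I)) = 1

/-- A `t`-maximal ideal: an ideal maximal in the set of proper integral `t`-ideals. -/
def IsTMaximal (M : Ideal A) : Prop :=
  M ≠ ⊤ ∧ IsTIdeal K M ∧ ∀ J : Ideal A, J ≠ ⊤ → IsTIdeal K J → M ≤ J → J = M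

variable (A)

/-- `A` is a Prüfer `v`-multiplication domain: every nonzero finitely generated ideal
is `t`-invertible. -/
def IsPVMD : Prop := ∀ I : Ideal A, I ≠ ⊥ → I.FG → IsTInvertible K I

/-- `Spec_t(A)` is Noetherian: the ascending chain condition on radical `t`-ideals. -/
def TSpecNoetherian : Prop :=
  ∀ f : ℕ →o Ideal A, (∀ n, IsTIdeal K (f n) ∧ (f n).radical = f n) →
    ∃ n, ∀ m, n ≤ m → f m = f n

variable {A K}

/-- A submodule of `K` is a subring of `K` iff it contains `1` and is closed under
multiplication (being an additive subgroup already). -/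
def IsSubringOf (S : Submodule A K) : Prop :=
  (1 : K) ∈ S ∧ ∀ x ∈ S, ∀ y ∈ S, x * y ∈ S

variable (K)

/-- The localization `A_P = {a/s : a ∈ A, s ∈ A ∖ P}` viewed as a subset of `K`. -/
def loc (P : Ideal A) : Set K :=
  {x | ∃ a s : A, s ∉ P ∧ x * algebraMap A K s = algebraMap A K a}

/-- The set `J A_P = {a/s : a ∈ J, s ∈ A ∖ P} ⊆ K`. -/
def locIdealAt (J P : Ideal A) : Set K :=
  {x | ∃ a ∈ J, ∃ s : A, s ∉ P ∧ x * algebraMap A K s = algebraMap A K a}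

/-- `Z(A, I)`: the set of zero divisors on `A/I`. -/
def ZSet (I : Ideal A) : Set A := {x | ∃ a : A, a ∉ I ∧ x * a ∈ I}

/-- `Q` is a maximal prime ideal of `Z(A,I)`: a prime contained in `Z(A,I)`, maximal
(under inclusion) among the primes contained in `Z(A,I)`. -/
def MaxPrimeOfZ (I Q : Ideal A) : Prop :=
  Q.IsPrime ∧ (Q : Set A) ⊆ ZSet I ∧
    ∀ Q' : Ideal A, Q'.IsPrime → (Q' : Set A) ⊆ ZSet I → Q ≤ Q' → Q' = Q

end Generic

section Overring

variable {R : Type*} [CommRing R] [IsDomain R]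
variable {K : Type*} [Field K] [Algebra R K] [IsFractionRing R K]

/-- The extension `IT` of an ideal `I` of `R` to an overring `T`, as a `T`-submodule of `K`. -/
def extendI (I : Ideal R) (T : Subalgebra R K) : Submodule T K :=
  Submodule.span T (algebraMap R K '' (I : Set R))

/-- The extension `IT` of an `R`-submodule `I` of `K` to an overring `T`. -/
def extendS (I : Submodule R K) (T : Subalgebra R K) : Submodule T K :=
  Submodule.span T (I : Set K)

/-- An overring `T` of `R` is `t`-linked over `R` if `(IT)⁻¹ = T` for each finitely
generated ideal `I` of `R` with `I⁻¹ = R`. -/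
def IsTLinked (T : Subalgebra R K) : Prop :=
  ∀ I : Ideal R, I.FG → dual (toK R K I) = 1 → dual (extendI I T) = 1

/-- An overring `T` of `R` is `t`-flat over `R` if `T_M = R_{M ∩ R}` for each
`t`-maximal ideal `M` of `T`. -/
def IsTFlat (T : Subalgebra R K) : Prop :=
  ∀ M : Ideal T, IsTMaximal K M → loc K M = loc K (M.comap (algebraMap R T))

variable (R K)

/-- `R` is a `tQR`-domain: a PVMD all of whose `t`-linked overrings are localizations
of `R` at multiplicative sets. -/
def IsTQR : Prop :=
  IsPVMD R K ∧ ∀ T : Subalgebra R K, IsTLinked T → ∃ S : Submonoid R,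
    (T : Set K) = {x | ∃ a : R, ∃ s ∈ S, x * algebraMap R K s = algebraMap R K a}

variable {R K}
variable (K)

/-- The endomorphism ring `(I : I) = {x ∈ K : x I ⊆ I}` of an ideal `I`, as an
overring of `R`. -/
def endoRing (I : Ideal R) : Subalgebra R K where
  carrier := {x : K | ∀ y ∈ toK R K I, x * y ∈ toK R K I}
  mul_mem' := by
    intro a b ha hb y hy
    rw [mul_assoc]
    exact ha _ (hb _ hy)
  one_mem' := by
    intro y hy
    rwa [one_mul]
  add_mem' := by
    intro a b ha hb y hy
    rw [add_mul]
    exact Submodule.add_mem _ (ha y hy) (hb y hy)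
  zero_mem' := by
    intro y hy
    rw [zero_mul]
    exact Submodule.zero_mem _
  algebraMap_mem' := by
    intro r y hy
    rw [← Algebra.smul_def]
    exact Submodule.smul_mem _ r hy

set_option synthInstance.maxHeartbeats 400000 in
/-- The ideal `I`, viewed as an ideal of its endomorphism ring `(I : I)`. -/
def idealInEndo (I : Ideal R) : Ideal (endoRing K I) where
  carrier := {x | (x : K) ∈ toK R K I}
  add_mem' := by
    intro a b ha hb
    simp only [Set.mem_setOf_eq] at *
    rw [AddMemClass.coe_add]
    exact Submodule.add_mem _ ha hb
  zero_mem' := by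
    simp only [Set.mem_setOf_eq, ZeroMemClass.coe_zero]
    exact Submodule.zero_mem _
  smul_mem' := by
    intro c x hx
    simp only [Set.mem_setOf_eq] at *
    rw [smul_eq_mul, MulMemClass.coe_mul]
    exact c.2 _ hx

/-- The Kaplansky transform `Ω(I) = {u ∈ K : ∀ a ∈ I, ∃ n ≥ 1, u aⁿ ∈ R}`, as an
overring of `R`. -/
def kaplansky (I : Ideal R) : Subalgebra R K where
  carrier := {u : K | ∀ a ∈ I, ∃ n : ℕ, 0 < n ∧
    ∃ r : R, u * (algebraMap R K a) ^ n = algebraMap R K r}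
  mul_mem' := by
    intro u v hu hv a ha
    obtain ⟨n, hn, r, hr⟩ := hu a ha
    obtain ⟨m, hm, s, hs⟩ := hv a ha
    refine ⟨n + m, by omega, r * s, ?_⟩
    rw [map_mul, ← hr, ← hs, pow_add]
    ring
  one_mem' := by
    intro a ha
    exact ⟨1, one_pos, a, by rw [pow_one, one_mul]⟩
  add_mem' := by
    intro u v hu hv a ha
    obtain ⟨n, hn, r, hr⟩ := hu a ha
    obtain ⟨m, hm, s, hs⟩ := hv a ha
    refine ⟨n + m, by omega, r * a ^ m + s * a ^ n, ?_⟩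
    rw [map_add, map_mul, map_mul, map_pow, map_pow, ← hr, ← hs, pow_add, add_mul]
    ring
  zero_mem' := by
    intro a ha
    exact ⟨1, one_pos, 0, by rw [map_zero, zero_mul]⟩
  algebraMap_mem' := by
    intro r a ha
    exact ⟨1, one_pos, r * a, by rw [map_mul, pow_one]⟩

/-- The Nagata (ideal) transform `T(I) = ⋃_{n ≥ 1} (R : Iⁿ)`, as an overring of `R`. -/
def nagata (I : Ideal R) : Subalgebra R K where
  carrier := {x : K | ∃ n : ℕ, ∀ y ∈ I ^ (n + 1),
    ∃ r : R, x * algebraMap R K y = algebraMap R K r}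
  mul_mem' := by
    intro x x' hx hx'
    obtain ⟨n, hn⟩ := hx
    obtain ⟨m, hm⟩ := hx'
    refine ⟨n + m + 1, fun y hy => ?_⟩
    rw [show n + m + 1 + 1 = (n + 1) + (m + 1) by omega, pow_add] at hy
    refine Submodule.mul_induction_on hy ?_ ?_
    · intro a ha b hb
      obtain ⟨r, hr⟩ := hn a ha
      obtain ⟨s, hs⟩ := hm b hb
      refine ⟨r * s, ?_⟩
      rw [map_mul, map_mul, ← hr, ← hs]
      ring
    · rintro y1 y2 ⟨r1, h1⟩ ⟨r2, h2⟩
      exact ⟨r1 + r2, by rw [map_add, map_add, mul_add, h1, h2]⟩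
  one_mem' := ⟨0, fun y _ => ⟨y, by rw [one_mul]⟩⟩
  add_mem' := by
    intro x x' hx hx'
    obtain ⟨n, hn⟩ := hx
    obtain ⟨m, hm⟩ := hx'
    refine ⟨n + m + 1, fun y hy => ?_⟩
    have h1 : y ∈ I ^ (n + 1) := Ideal.pow_le_pow_right (by omega) hy
    have h2 : y ∈ I ^ (m + 1) := Ideal.pow_le_pow_right (by omega) hy
    obtain ⟨r, hr⟩ := hn y h1
    obtain ⟨s, hs⟩ := hm y h2
    exact ⟨r + s, by rw [map_add, add_mul, hr, hs]⟩
  zero_mem' := ⟨0, fun y _ => ⟨0, by rw [map_zero, zero_mul]⟩⟩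
  algebraMap_mem' := by
    intro r
    exact ⟨0, fun y _ => ⟨r * y, by rw [map_mul]⟩⟩

end Overring


section Aux

variable {A : Type*} [CommRing A] {K : Type*} [Field K] [Algebra A K]

lemma mem_one_div {I : Submodule A K} {x : K} :
    x ∈ (1 : Submodule A K) / I ↔ ∀ y ∈ I, x * y ∈ (1 : Submodule A K) :=
  Submodule.mem_div_iff_forall_mul_mem

lemma div_antitone {I J : Submodule A K} (h : I ≤ J) :
    (1 : Submodule A K) / J ≤ 1 / I := fun x hx =>
  mem_one_div.2 fun y hy => mem_one_div.1 hx y (h hy)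

lemma le_vOp (I : Submodule A K) : I ≤ vOp I := by
  intro x hx
  rw [vOp]
  rw [mem_one_div]
  intro y hy
  simpa [mul_comm] using mem_one_div.1 hy x hx

lemma vOp_mono {I J : Submodule A K} (h : I ≤ J) : vOp I ≤ vOp J :=
  div_antitone (div_antitone h)

lemma one_div_vOp (I : Submodule A K) : (1 : Submodule A K) / vOp I = 1 / I :=
  le_antisymm (div_antitone (le_vOp I)) (le_vOp ((1 : Submodule A K) / I))

lemma vOp_one_div (I : Submodule A K) : vOp ((1 : Submodule A K) / I) = 1 / I :=
  one_div_vOp I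

lemma tOp_le_vOp (I : Submodule A K) : tOp I ≤ vOp I := by
  apply sSup_le
  rintro V ⟨J, -, -, hJI, rfl⟩
  exact vOp_mono hJI

lemma le_tOp (I : Submodule A K) : I ≤ tOp I := by
  intro x hx
  by_cases hx0 : x = 0
  · simp [hx0]
  · have hmem : vOp (Submodule.span A {x}) ∈
        {V | ∃ J : Submodule A K, J ≠ ⊥ ∧ J.FG ∧ J ≤ I ∧ V = vOp J} := by
      refine ⟨Submodule.span A {x}, ?_, Submodule.fg_span_singleton x, ?_, rfl⟩
      · simpa [Submodule.span_singleton_eq_bot] using hx0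
      · rwa [Submodule.span_singleton_le_iff_mem]
    exact le_sSup hmem (le_vOp _ (Submodule.mem_span_singleton_self x))

lemma mul_mem_one {x y : K} (hx : x ∈ (1 : Submodule A K)) (hy : y ∈ (1 : Submodule A K)) :
    x * y ∈ (1 : Submodule A K) := by
  have := Submodule.mul_mem_mul hx hy
  rwa [one_mul] at this

lemma one_div_one : (1 : Submodule A K) / 1 = 1 := by
  apply le_antisymm
  · intro x hx
    have := mem_one_div.1 hx 1 (Submodule.one_le.mp le_rfl)
    rwa [mul_one] at this
  · intro x hx
    exact mem_one_div.2 fun y hy => mul_mem_one hx hy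

lemma vOp_one : vOp (1 : Submodule A K) = 1 := by
  show (1 : Submodule A K) / (1 / 1) = 1
  rw [one_div_one, one_div_one]

lemma vOp_le_one {I : Submodule A K} (h : I ≤ 1) : vOp I ≤ 1 := by
  have h1 : vOp I ≤ vOp 1 := vOp_mono h
  rwa [vOp_one] at h1

end Aux

section AuxT

variable {R : Type*} [CommRing R] [IsDomain R]
variable {K : Type*} [Field K] [Algebra R K]
variable {T : Subalgebra R K}

lemma mem_oneT {x : K} : x ∈ (1 : Submodule T K) ↔ x ∈ T := by
  rw [Submodule.one_eq_range]
  constructor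
  · rintro ⟨t, rfl⟩; exact t.2
  · intro hx; exact ⟨⟨x, hx⟩, rfl⟩

lemma mem_toKT {M : Ideal T} {x : K} :
    x ∈ toK T K M ↔ ∃ m : T, m ∈ M ∧ (m : K) = x := by
  simp only [toK, Submodule.mem_map]
  constructor
  · rintro ⟨m, hm, rfl⟩; exact ⟨m, hm, rfl⟩
  · rintro ⟨m, hm, rfl⟩; exact ⟨m, hm, rfl⟩

lemma toKT_le_one (M : Ideal T) : toK T K M ≤ (1 : Submodule T K) := by
  intro x hx
  obtain ⟨m, -, rfl⟩ := mem_toKT.1 hx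
  exact mem_oneT.2 m.2

lemma isTIdeal_of_eq_one_div (M : Ideal T) (D : Submodule T K)
    (h : toK T K M = (1 : Submodule T K) / D) : IsTIdeal K M := by
  apply le_antisymm
  · calc tOp (toK T K M) ≤ vOp (toK T K M) := tOp_le_vOp _
      _ = toK T K M := by rw [h]; exact vOp_one_div D
  · exact le_tOp _

/-- every proper `t`-ideal of `T` is contained in a `t`-maximal ideal. -/
lemma exists_tMaximal (C : Ideal T) (hC : C ≠ ⊤) (htC : IsTIdeal K C) :
    ∃ M : Ideal T, IsTMaximal K M ∧ C ≤ M := by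
  set s : Set (Ideal T) := {J | J ≠ ⊤ ∧ IsTIdeal K J} with hs
  have hzorn := zorn_le_nonempty₀ s ?_ C ⟨hC, htC⟩
  · obtain ⟨M, hCM, hMs, hMmax⟩ := hzorn
    refine ⟨M, ⟨hMs.1, hMs.2, ?_⟩, hCM⟩
    intro J hJ htJ hMJ
    exact le_antisymm (hMmax ⟨hJ, htJ⟩ hMJ) hMJ
  · intro c hcs hchain y hyc
    refine ⟨sSup c, ⟨?_, ?_⟩, fun z hz => le_sSup hz⟩
    · -- sSup c ≠ ⊤
      intro htop
      have h1 : (1 : T) ∈ sSup c := htop ▸ Submodule.mem_top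
      rw [Submodule.mem_sSup_of_directed ⟨y, hyc⟩ hchain.directedOn] at h1
      obtain ⟨J, hJc, hJ1⟩ := h1
      exact (hcs hJc).1 (Ideal.eq_top_of_isUnit_mem _ hJ1 isUnit_one)
    · -- sSup c is a t-ideal
      apply le_antisymm _ (le_tOp _)
      apply sSup_le
      rintro V ⟨F, hF0, hFfg, hFle, rfl⟩
      obtain ⟨S, hS⟩ := hFfg
      -- find a common member of the chain containing all generators
      have hkey : ∀ S' : Finset K, (S' : Set K) ⊆ (toK T K (sSup c) : Set K) →
          ∃ J ∈ c, (S' : Set K) ⊆ (toK T K J : Set K) := by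
        intro S'
        induction S' using Finset.induction_on with
        | empty => exact fun _ => ⟨y, hyc, by simp⟩
        | @insert g S'' hg ih =>
          intro hsub
          rw [Finset.coe_insert, Set.insert_subset_iff] at hsub
          obtain ⟨J₁, hJ₁c, hJ₁⟩ := ih hsub.2
          obtain ⟨m, hm, rfl⟩ := mem_toKT.1 hsub.1
          rw [Submodule.mem_sSup_of_directed ⟨y, hyc⟩ hchain.directedOn] at hm
          obtain ⟨J₂, hJ₂c, hJ₂⟩ := hm
          rcases hchain.total hJ₁c hJ₂c with h | h
          · refine ⟨J₂, hJ₂c, ?_⟩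
            rw [Finset.coe_insert, Set.insert_subset_iff]
            exact ⟨mem_toKT.2 ⟨m, hJ₂, rfl⟩,
              hJ₁.trans (Submodule.map_mono h)⟩
          · refine ⟨J₁, hJ₁c, ?_⟩
            rw [Finset.coe_insert, Set.insert_subset_iff]
            exact ⟨mem_toKT.2 ⟨m, h hJ₂, rfl⟩, hJ₁⟩
      obtain ⟨J, hJc, hJ⟩ := hkey S (by rw [← hS] at hFle
                                        exact (Submodule.span_le.mp hFle))
      have hFJ : F ≤ toK T K J := by rw [← hS]; exact Submodule.span_le.mpr hJ
      have hVle : vOp F ≤ toK T K J := by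
        have : vOp F ≤ tOp (toK T K J) :=
          le_sSup ⟨F, hF0, ⟨S, hS⟩, hFJ, rfl⟩
        rwa [(hcs hJc).2] at this
      exact hVle.trans (Submodule.map_mono (le_sSup hJc))

set_option maxHeartbeats 1600000 in
/-- `t`-maximal ideals are prime. -/
lemma tMaximal_isPrime {M : Ideal T} (hM : IsTMaximal K M) : M.IsPrime := by
  refine ⟨hM.1, ?_⟩
  intro a b hab
  by_contra hcon
  push_neg at hcon
  obtain ⟨ha, hb⟩ := hcon
  have hb0 : (b : K) ≠ 0 := by
    intro h
    exact hb (by simpa using (show b = 0 from Subtype.coe_injective h) ▸ M.zero_mem)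
  -- the ideal J = (M : b)
  set Jid : Ideal T := Submodule.comap (LinearMap.mulLeft T b) M with hJid
  have hmemJ : ∀ t : T, t ∈ Jid ↔ b * t ∈ M := fun t => Iff.rfl
  have htJ : IsTIdeal K Jid := by
    apply le_antisymm _ (le_tOp _)
    apply sSup_le
    rintro V ⟨F, hF0, hFfg, hFle, rfl⟩
    intro x hx
    have hx1 : x ∈ (1 : Submodule T K) :=
      vOp_le_one (hFle.trans (toKT_le_one Jid)) hx
    obtain ⟨t, ht⟩ : ∃ t : T, (t : K) = x := ⟨⟨x, mem_oneT.1 hx1⟩, rfl⟩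
    -- F' = F * span {b}
    set F' : Submodule T K := F * Submodule.span T {(b : K)} with hF'
    have hF'fg : F'.FG := Submodule.FG.mul hFfg (Submodule.fg_span_singleton _)
    have hF'0 : F' ≠ ⊥ := by
      obtain ⟨z, hz, hz0⟩ := (Submodule.ne_bot_iff F).1 hF0
      have : z * (b : K) ∈ F' :=
        Submodule.mul_mem_mul hz (Submodule.subset_span rfl)
      exact (Submodule.ne_bot_iff F').2 ⟨z * (b : K), this, mul_ne_zero hz0 hb0⟩
    have hF'le : F' ≤ toK T K M := by
      rw [hF']
      apply Submodule.mul_le.2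
      intro u hu v hv
      obtain ⟨j, hj, rfl⟩ := mem_toKT.1 (hFle hu)
      obtain ⟨t', rfl⟩ := Submodule.mem_span_singleton.1 hv
      refine mem_toKT.2 ⟨t' * (b * j), M.mul_mem_left t' hj, ?_⟩
      rw [show t' • ((b : K)) = (t' : K) * (b : K) from rfl]
      push_cast
      ring
    have hxb : x * (b : K) ∈ vOp F' := by
      rw [vOp, mem_one_div]
      intro y hy
      have hby : (b : K) * y ∈ (1 : Submodule T K) / F := by
        rw [mem_one_div]
        intro f hf
        have hfb : f * (b : K) ∈ F' :=
          Submodule.mul_mem_mul hf (Submodule.subset_span rfl)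
        have := mem_one_div.1 hy _ hfb
        rw [show y * (f * (b : K)) = (b : K) * y * f by ring] at this
        exact this
      have := mem_one_div.1 hx _ hby
      rw [show x * ((b : K) * y) = x * (b : K) * y by ring] at this
      exact this
    have hvF' : vOp F' ≤ toK T K M := by
      have : vOp F' ≤ tOp (toK T K M) := le_sSup ⟨F', hF'0, hF'fg, hF'le, rfl⟩
      rwa [hM.2.1] at this
    obtain ⟨m, hm, hmeq⟩ := mem_toKT.1 (hvF' hxb)
    have : b * t = m := by
      apply Subtype.coe_injective
      push_cast
      rw [hmeq, ← ht]
      ring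
    exact mem_toKT.2 ⟨t, (hmemJ t).2 (this ▸ hm), ht.symm ▸ rfl⟩
  have hJtop : Jid ≠ ⊤ := by
    intro h
    apply hb
    have : (1 : T) ∈ Jid := h ▸ Submodule.mem_top
    simpa using (hmemJ 1).1 this
  have hMJ : M ≤ Jid := fun m hm => (hmemJ m).2 (M.mul_mem_left b hm)
  have := hM.2.2 Jid hJtop htJ hMJ
  apply ha
  rw [← this]
  exact (hmemJ a).2 (by rwa [mul_comm])

/-- `T` is the intersection of its localizations at `t`-maximal ideals. -/
lemma mem_one_of_forall_loc {w : K}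
    (h : ∀ M : Ideal T, IsTMaximal K M → w ∈ loc K (A := T) M) :
    w ∈ (1 : Submodule T K) := by
  by_contra hw
  set D : Submodule T K := 1 ⊔ Submodule.span T {w} with hD
  set Cmod : Submodule T K := (1 : Submodule T K) / D with hCmod
  have hCle : Cmod ≤ 1 := by
    intro x hx
    have := mem_one_div.1 hx 1 ((le_sup_left : (1 : Submodule T K) ≤ D) (Submodule.one_le.mp le_rfl))
    rwa [mul_one] at this
  set C : Ideal T := Submodule.comap (Algebra.linearMap T K) Cmod with hC'
  have hCmem : ∀ t : T, t ∈ C ↔ (t : K) ∈ Cmod := fun t => Iff.rfl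
  have htoKC : toK T K C = Cmod := by
    apply le_antisymm
    · intro x hx
      obtain ⟨m, hm, rfl⟩ := mem_toKT.1 hx
      exact (hCmem m).1 hm
    · intro x hx
      obtain ⟨t, ht⟩ : ∃ t : T, (t : K) = x := ⟨⟨x, mem_oneT.1 (hCle hx)⟩, rfl⟩
      exact mem_toKT.2 ⟨t, (hCmem t).2 (ht ▸ hx), ht⟩
  have htC : IsTIdeal K C := isTIdeal_of_eq_one_div C D htoKC
  have hCtop : C ≠ ⊤ := by
    intro h
    apply hw
    have h1 : (1 : T) ∈ C := h ▸ Submodule.mem_top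
    have := mem_one_div.1 ((hCmem 1).1 h1) w
      (le_sup_right (a := (1 : Submodule T K)) (Submodule.mem_span_singleton_self w))
    simpa using this
  obtain ⟨M, hMmax, hCM⟩ := exists_tMaximal C hCtop htC
  obtain ⟨a, s, hsM, hws⟩ := h M hMmax
  apply hsM
  apply hCM
  rw [hCmem]
  rw [hCmod, mem_one_div]
  intro y hy
  rw [hD, Submodule.mem_sup] at hy
  obtain ⟨y₁, hy₁, y₂, hy₂, rfl⟩ := hy
  obtain ⟨t', rfl⟩ := Submodule.mem_span_singleton.1 hy₂
  rw [mul_add]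

  apply Submodule.add_mem
  · exact mul_mem_one (mem_oneT.2 s.2) hy₁
  · have hws' : (s : K) * w = (a : K) := by
      have : w * algebraMap T K s = algebraMap T K a := hws
      rw [show (algebraMap T K s : K) = (s : K) from rfl,
        show (algebraMap T K a : K) = (a : K) from rfl] at this
      rw [mul_comm]; exact this
    have : (s : K) * (t' • w) = t' • ((s : K) * w) := by
      show (s : K) * ((t' : K) * w) = (t' : K) * ((s : K) * w)
      ring
    rw [this, hws']
    exact Submodule.smul_mem _ t' (mem_oneT.2 a.2)

lemma one_le_locM {M : Ideal T} (hM : M ≠ ⊤) {x : K}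
    (hx : x ∈ (1 : Submodule T K)) : x ∈ loc K (A := T) M := by
  obtain ⟨t, ht⟩ : ∃ t : T, (t : K) = x := ⟨⟨x, mem_oneT.1 hx⟩, rfl⟩
  refine ⟨t, 1, fun h1 => hM (Ideal.eq_top_of_isUnit_mem _ h1 isUnit_one), ?_⟩
  rw [show (algebraMap T K (1 : T) : K) = 1 from rfl, mul_one, ← ht]
  rfl

end AuxT

section AuxMain

variable {R : Type*} [CommRing R] [IsDomain R]
variable {K : Type*} [Field K] [Algebra R K] [IsFractionRing R K]

/-- The key lemma: for `T` `t`-flat and `J` a nonzero f.g. `R`-submodule of `K`,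
`J_v ⊆ (JT)_{v₁}`. -/
lemma vOp_subset_vOp_extendS (T : Subalgebra R K) (hT : IsTFlat T)
    (J : Submodule R K) (hJfg : J.FG) :
    (vOp J : Set K) ⊆ (vOp (extendS J T) : Set K) := by
  intro x hx
  rw [SetLike.mem_coe, vOp, mem_one_div]
  intro z hz
  apply mem_one_of_forall_loc
  intro M hM
  have hMtop : M ≠ ⊤ := hM.1
  have hloc := hT M hM
  have hPprime : (M.comap (algebraMap R T)).IsPrime :=
    haveI : M.IsPrime := tMaximal_isPrime hM
    Ideal.IsPrime.comap _
  set P : Ideal R := M.comap (algebraMap R T) with hP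
  obtain ⟨S, hS⟩ := hJfg
  -- each z * g for g ∈ S lies in loc K P
  have hzg : ∀ g ∈ S, z * g ∈ loc K (A := R) P := by
    intro g hg
    have hgJ : g ∈ J := hS ▸ Submodule.subset_span hg
    have hgE : g ∈ extendS J T := Submodule.subset_span hgJ
    have h1 : z * g ∈ (1 : Submodule T K) := mem_one_div.1 hz g hgE
    have : z * g ∈ loc K (A := T) M := one_le_locM hMtop h1
    rwa [hloc] at this
  choose! a s hs heq using hzg
  set sden : R := ∏ g ∈ S, s g with hsden
  have hsdenP : sden ∉ P := by
    intro hmem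
    obtain ⟨g, hgS, hgP⟩ := Ideal.IsPrime.prod_mem_iff.mp hmem
    exact hs g hgS hgP
  -- z * sden ∈ (R : J)
  have hzs : z * algebraMap R K sden ∈ (1 : Submodule R K) / J := by
    rw [mem_one_div]
    intro j hj
    rw [← hS] at hj
    induction hj using Submodule.span_induction with
    | mem g hg =>
      classical
      have : z * algebraMap R K sden * g =
          algebraMap R K (a g * ∏ g' ∈ S.erase g, s g') := by
        rw [map_mul, ← heq g hg, hsden, ← Finset.mul_prod_erase S s hg]
        push_cast [map_mul, map_prod]
        ring
      rw [this, Submodule.one_eq_range]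
      exact ⟨_, rfl⟩
    | zero => simpa using Submodule.zero_mem _
    | add u v hu hv ihu ihv =>
      rw [mul_add]; exact Submodule.add_mem _ ihu ihv
    | smul r u hu ihu =>
      have : z * algebraMap R K sden * (r • u) = r • (z * algebraMap R K sden * u) := by
        rw [Algebra.smul_def, Algebra.smul_def]; ring
      rw [this]
      exact Submodule.smul_mem _ r ihu
  have hxzs : x * (z * algebraMap R K sden) ∈ (1 : Submodule R K) :=
    mem_one_div.1 hx _ hzs
  rw [Submodule.one_eq_range] at hxzs
  obtain ⟨r, hr⟩ := hxzs
  rw [hloc]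
  exact ⟨r, sden, hsdenP, by rw [mul_assoc]; exact hr.symm⟩

end AuxMain

section Statements

variable {R : Type*} [CommRing R] [IsDomain R]
variable {K : Type*} [Field K] [Algebra R K] [IsFractionRing R K]

/-- Let `T` be a `t`-flat overring of an integral domain `R`. Then for
every nonzero fractional ideal `I` of `R`, `I_t ⊆ (IT)_{t₁}`, where `t₁` is the
`t`-operation of `T`. -/
theorem statement_4 (T : Subalgebra R K) (hT : IsTFlat T)
    (I : Submodule R K) (hbot : I ≠ ⊥) (hfrac : IsFractional (nonZeroDivisors R) I) :
    (tOp I : Set K) ⊆ (tOp (extendS I T) : Set K) := by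
  intro x hx
  rw [SetLike.mem_coe] at hx
  -- restrict scalars to compare the two submodules
  set W : Submodule R K := (tOp (extendS I T)).restrictScalars R with hW
  have hle : tOp I ≤ W := by
    apply sSup_le
    rintro V ⟨J, hJ0, hJfg, hJI, rfl⟩
    intro y hy
    have hkey := vOp_subset_vOp_extendS T hT J hJfg hy
    rw [SetLike.mem_coe] at hkey
    have hE0 : extendS J T ≠ ⊥ := by
      obtain ⟨z, hz, hz0⟩ := (Submodule.ne_bot_iff J).1 hJ0
      exact (Submodule.ne_bot_iff _).2 ⟨z, Submodule.subset_span hz, hz0⟩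
    have hEfg : (extendS J T).FG := by
      obtain ⟨S, hS⟩ := hJfg
      refine ⟨S, le_antisymm ?_ ?_⟩
      · apply Submodule.span_le.2
        intro g hg
        exact Submodule.subset_span (hS ▸ Submodule.subset_span hg)
      · apply Submodule.span_le.2
        intro g hg
        rw [← hS] at hg
        have : (↑S : Set K) ⊆ ((Submodule.span T (↑S : Set K)).restrictScalars R : Set K) :=
          fun u hu => Submodule.subset_span hu
        exact (Submodule.span_le.2 this) hg
    have hEle : extendS J T ≤ extendS I T := Submodule.span_mono hJI
    have : vOp (extendS J T) ≤ tOp (extendS I T) :=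
      le_sSup ⟨extendS J T, hE0, hEfg, hEle, rfl⟩
    exact this hkey
  exact hle hx

end Statements

end

end PVMDPaper
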